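/- Let n ≥ 1, let a : Fin n → ℝ satisfy a i > 0 for all i, and let λ ∈ ℝ satisfy λ < a i for all i. Define the linear map T on EuclideanSpace ℝ (Fin n) coordinatewise by (T x) i = Real.sqrt ((a i - λ) / a i) * x i. If x and y lie on the ellipsoid E, i.e. ∑ i, (x i)^2 / a i = 1 and ∑ i, (y i)^2 / a i = 1, then ‖x - T y‖ = ‖T x - y‖. (Ivory's Lemma: for two confocal ellipsoids E and T(E) and corresponding pairs of points x, T x and y, T y, the two 'diagonal' distances are equal.) -/

import Mathlib

/-! For a diagonal map `T = diag c`, coordinatewise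
`(xᵢ - cᵢ yᵢ)² - (cᵢ xᵢ - yᵢ)² = (1 - cᵢ²)(xᵢ² - yᵢ²)`, so `‖x - T y‖ = ‖T x - y‖` as soon as the
quadratic form `∑ (1 - cᵢ²) zᵢ²` takes the same value at `x` and `y`. For the confocal map
`1 - cᵢ² = λ / aᵢ`, and that form is `λ` times the equation of the ellipsoid. -/

open Finset

section Diagonal

variable {ι : Type*} [Fintype ι] (c : ι → ℝ)
  (T : EuclideanSpace ℝ ι → EuclideanSpace ℝ ι) (hT : ∀ x i, T x i = c i * x i)
include hT

theorem norm_sub_diag_sq_sub_norm_diag_sub_sq (x y : EuclideanSpace ℝ ι) :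
    ‖x - T y‖ ^ 2 - ‖T x - y‖ ^ 2 = ∑ i, (1 - c i ^ 2) * (x i ^ 2 - y i ^ 2) := by
  simp only [EuclideanSpace.norm_sq_eq, PiLp.sub_apply, hT, Real.norm_eq_abs, sq_abs,
    ← sum_sub_distrib]
  exact sum_congr rfl fun i _ => by ring

theorem norm_sub_diag_eq_norm_diag_sub {x y : EuclideanSpace ℝ ι}
    (hxy : ∑ i, (1 - c i ^ 2) * x i ^ 2 = ∑ i, (1 - c i ^ 2) * y i ^ 2) :
    ‖x - T y‖ = ‖T x - y‖ := by
  have hsq : ‖x - T y‖ ^ 2 = ‖T x - y‖ ^ 2 := by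
    rw [← sub_eq_zero, norm_sub_diag_sq_sub_norm_diag_sub_sq c T hT]
    simp only [mul_sub, sum_sub_distrib, hxy, sub_self]
  exact (sq_eq_sq₀ (norm_nonneg _) (norm_nonneg _)).mp hsq

end Diagonal

theorem one_sub_sq_sqrt_confocal {a lam : ℝ} (ha : 0 < a) (hlam : lam ≤ a) :
    1 - √((a - lam) / a) ^ 2 = lam / a := by
  rw [Real.sq_sqrt (div_nonneg (sub_nonneg.mpr hlam) ha.le)]
  field_simp
  ring

theorem ivory_lemma_euclidean (n : ℕ) (a : Fin n → ℝ) (ha : ∀ i, 0 < a i)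
    (lam : ℝ) (hlam : ∀ i, lam < a i)
    (T : EuclideanSpace ℝ (Fin n) →ₗ[ℝ] EuclideanSpace ℝ (Fin n))
    (hT : ∀ (x : EuclideanSpace ℝ (Fin n)) (i : Fin n),
      T x i = Real.sqrt ((a i - lam) / a i) * x i)
    (x y : EuclideanSpace ℝ (Fin n))
    (hx : ∑ i, (x i) ^ 2 / a i = 1) (hy : ∑ i, (y i) ^ 2 / a i = 1) :
    ‖x - T y‖ = ‖T x - y‖ := by
  have form_eq_lam (z : EuclideanSpace ℝ (Fin n)) (hz : ∑ i, z i ^ 2 / a i = 1) :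
      ∑ i, (1 - √((a i - lam) / a i) ^ 2) * z i ^ 2 = lam := by
    simp only [one_sub_sq_sqrt_confocal (ha _) (hlam _).le, div_mul_eq_mul_div, mul_div_assoc,
      ← mul_sum, hz, mul_one]
  exact norm_sub_diag_eq_norm_diag_sub _ T hT ((form_eq_lam x hx).trans (form_eq_lam y hy).symm)
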